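/- arXiv:math/0203030 — 3 statements merged into one kernel-verified Lean document; each statement's English description precedes it below -/
import Mathlib

section
/- In the completion setup, the subgroup L̃ = {(t, φ(t)) : t ∈ L} is uniformly discrete in G × H: there exists an open neighbourhood N of (0,0) in G × H such that L̃ ∩ N = {(0,0)}; in particular L̃ is a discrete subgroup of G × H. -/
open scoped Pointwise

/-- A function `η : G → ℂ` on an additive abelian group is positive definite if all the
finite double sums `∑ i, ∑ j, c i * conj (c j) * η (x i - x j)` are nonnegative reals. -/
def IsPositiveDefiniteFn {G : Type*} [AddCommGroup G] (η : G → ℂ) : Prop :=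
  ∀ (N : ℕ) (x : Fin N → G) (c : Fin N → ℂ),
    ∃ r : ℝ, 0 ≤ r ∧ ∑ i, ∑ j, c i * (starRingEnd ℂ) (c j) * η (x i - x j) = (r : ℂ)

/-- The autocorrelation pseudometric `ρ(s,t) = |1 − η(s−t)/η(0)|^{1/2}`. -/
noncomputable def acRho {G : Type*} [AddCommGroup G] (η : G → ℂ) (s t : G) : ℝ :=
  Real.sqrt (‖1 - η (s - t) / η 0‖)

/-- The set of `ε`-almost periods `P_ε = {t : ρ(t,0) < ε}`. -/
noncomputable def almostPeriods {G : Type*} [AddCommGroup G] (η : G → ℂ) (ε : ℝ) : Set G :=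
  {t : G | acRho η t 0 < ε}

/-- A subset `P` of a topological abelian group is relatively dense if `P + K = G`
for some compact `K`. -/
def RelativelyDense {G : Type*} [AddCommGroup G] [TopologicalSpace G] (P : Set G) : Prop :=
  ∃ K : Set G, IsCompact K ∧ P + K = Set.univ

/-!
Since `Δ = {η ≠ 0}` is discrete, some open `U ⊆ G` meets `Δ` only in `0`. On the other hand
`ρ(t, 0) = 1` whenever `η t = 0`, so every `t ∈ L` whose image lies in the unit ball of `H`
around `0` belongs to `Δ`. Hence `U × B_H(0, 1)` meets `L̃` only in `(0, 0)`.
-/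

open UniformSpace

section AcRho

variable {G : Type*} [AddCommGroup G] {η : G → ℂ}

lemma acRho_eq_one_of_eq_zero {s t : G} (h : η (s - t) = 0) : acRho η s t = 1 := by
  simp [acRho, h]

lemma ne_zero_of_acRho_lt_one {s t : G} (h : acRho η s t < 1) : η (s - t) ≠ 0 :=
  fun h0 => h.ne (acRho_eq_one_of_eq_zero h0)

lemma ne_zero_of_dist_completion_lt_one {L : AddSubgroup G} [PseudoMetricSpace L]
    (hdist : ∀ s t : L, dist s t = acRho η s t) {t : L}
    (ht : dist (t : Completion L) ((0 : L) : Completion L) < 1) : η t ≠ 0 := by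
  rw [Completion.dist_eq, hdist] at ht
  simpa using ne_zero_of_acRho_lt_one ht

end AcRho

theorem diagonal_embedding_uniformly_discrete_general {G : Type*} [AddCommGroup G] [TopologicalSpace G]
    (η : G → ℂ) (hη0 : 0 < (η 0).re)
    (hdiscrete : DiscreteTopology {z : G | η z ≠ 0})
    [PseudoMetricSpace ↥(AddSubgroup.closure {z : G | η z ≠ 0})]
    (hdist : ∀ s t : ↥(AddSubgroup.closure {z : G | η z ≠ 0}),
      dist s t = acRho η (s : G) (t : G)) :
    ∃ N : Set (G × UniformSpace.Completion ↥(AddSubgroup.closure {z : G | η z ≠ 0})),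
      IsOpen N ∧
      ((0 : G), ((0 : ↥(AddSubgroup.closure {z : G | η z ≠ 0})) :
          UniformSpace.Completion ↥(AddSubgroup.closure {z : G | η z ≠ 0}))) ∈ N ∧
      {p : G × UniformSpace.Completion ↥(AddSubgroup.closure {z : G | η z ≠ 0}) |
          ∃ t : ↥(AddSubgroup.closure {z : G | η z ≠ 0}),
            p = ((t : G), (t : UniformSpace.Completion ↥(AddSubgroup.closure {z : G | η z ≠ 0})))}
        ∩ N =
      {((0 : G), ((0 : ↥(AddSubgroup.closure {z : G | η z ≠ 0})) :
          UniformSpace.Completion ↥(AddSubgroup.closure {z : G | η z ≠ 0})))} := by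
  have h0 : (0 : G) ∈ {z : G | η z ≠ 0} := fun h => by simp [h] at hη0
  obtain ⟨U, hU, hUΔ⟩ := isOpen_inter_eq_singleton_of_mem_discrete
    (isDiscrete_iff_discreteTopology.mpr hdiscrete) h0
  have hU0 : (0 : G) ∈ U := (hUΔ.ge rfl).1
  refine ⟨U ×ˢ Metric.ball _ 1, hU.prod Metric.isOpen_ball, ⟨hU0, Metric.mem_ball_self one_pos⟩, ?_⟩
  ext p
  constructor
  · rintro ⟨⟨t, rfl⟩, htU, htB⟩
    have ht0 : (t : G) = 0 := hUΔ.le ⟨htU, ne_zero_of_dist_completion_lt_one hdist htB⟩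
    obtain rfl : t = 0 := Subtype.ext ht0
    rfl
  · rintro rfl
    exact ⟨⟨0, rfl⟩, hU0, Metric.mem_ball_self one_pos⟩

/-- In the completion setup, the diagonal embedding `L̃ = {(t, φ(t)) : t ∈ L}` of the group `L`
generated by the support of `η` is uniformly discrete in `G × H`, where `H` is the completion
of `L` in the autocorrelation pseudometric and `φ` the canonical map; in particular `L̃` is a
discrete subgroup of `G × H`. -/
theorem diagonal_embedding_uniformly_discrete {G : Type*} [AddCommGroup G] [TopologicalSpace G]
    [IsTopologicalAddGroup G] [LocallyCompactSpace G] [T2Space G] [SigmaCompactSpace G]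
    (η : G → ℂ) (hpd : IsPositiveDefiniteFn η) (hη0 : 0 < (η 0).re)
    (hclosed : IsClosed {z : G | η z ≠ 0}) (hdiscrete : DiscreteTopology {z : G | η z ≠ 0})
    (hdense : ∀ ε : ℝ, 0 < ε → RelativelyDense (almostPeriods η ε))
    [PseudoMetricSpace ↥(AddSubgroup.closure {z : G | η z ≠ 0})]
    (hdist : ∀ s t : ↥(AddSubgroup.closure {z : G | η z ≠ 0}),
      dist s t = acRho η (s : G) (t : G)) :
    ∃ N : Set (G × UniformSpace.Completion ↥(AddSubgroup.closure {z : G | η z ≠ 0})),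
      IsOpen N ∧
      ((0 : G), ((0 : ↥(AddSubgroup.closure {z : G | η z ≠ 0})) :
          UniformSpace.Completion ↥(AddSubgroup.closure {z : G | η z ≠ 0}))) ∈ N ∧
      {p : G × UniformSpace.Completion ↥(AddSubgroup.closure {z : G | η z ≠ 0}) |
          ∃ t : ↥(AddSubgroup.closure {z : G | η z ≠ 0}),
            p = ((t : G), (t : UniformSpace.Completion ↥(AddSubgroup.closure {z : G | η z ≠ 0})))}
        ∩ N =
      {((0 : G), ((0 : ↥(AddSubgroup.closure {z : G | η z ≠ 0})) :
          UniformSpace.Completion ↥(AddSubgroup.closure {z : G | η z ≠ 0})))} :=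
  diagonal_embedding_uniformly_discrete_general η hη0 hdiscrete hdist
end

section
/- In the completion setup, the subgroup L̃ = {(t, φ(t)) : t ∈ L} is relatively dense in G × H: there exists a compact set C ⊆ G × H such that L̃ + C = G × H. -/
open scoped Pointwise

open Metric Set
open UniformSpace (Completion)

theorem acRho_add_left {G : Type*} [AddCommGroup G] (η : G → ℂ) (z s t : G) :
    acRho η (z + s) (z + t) = acRho η s t := by
  simp only [acRho, add_sub_add_left_eq_sub]

theorem apply_ne_zero_of_acRho_lt_one {G : Type*} [AddCommGroup G] {η : G → ℂ} {z : G}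
    (h : acRho η z 0 < 1) : η z ≠ 0 := by
  intro hz
  simp [acRho, hz] at h

theorem RelativelyDense.mono {G : Type*} [AddCommGroup G] [TopologicalSpace G] {P Q : Set G}
    (hP : RelativelyDense P) (hPQ : P ⊆ Q) : RelativelyDense Q := by
  obtain ⟨K, hK, hPK⟩ := hP
  exact ⟨K, hK, eq_univ_of_univ_subset (hPK ▸ add_subset_add_right hPQ)⟩

section SeminormedGroup

variable {G L : Type*} [AddCommGroup G] [TopologicalSpace G] [SeminormedAddCommGroup L]

theorem totallyBounded_ball_of_relativelyDense {ι : L →+ G} (hι : Function.Injective ι)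
    {D : Set G} (hD : IsClosed D) (hDdisc : IsDiscrete D) {r R : ℝ} (hrR : r < R)
    (hsub : ι '' ball 0 R ⊆ D) (hdense : ∀ ε > 0, RelativelyDense (ι '' ball 0 ε)) :
    TotallyBounded (ball (0 : L) r) := by
  rw [Metric.totallyBounded_iff]
  intro ε hε
  obtain ⟨K, hK, hKeq⟩ := hdense (min ε (R - r)) (lt_min hε (sub_pos.2 hrR))
  have hfin : (D ∩ K).Finite := (hK.inter_left hD).finite (hDdisc.mono inter_subset_left)
  refine ⟨ι ⁻¹' (D ∩ K), hfin.preimage hι.injOn, fun u hu => ?_⟩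
  obtain ⟨_, ⟨p, hp, rfl⟩, k, hk, hpk⟩ := mem_add.1 (hKeq ▸ mem_univ (ι u))
  rw [mem_ball_zero_iff] at hu hp
  have hk_eq : ι (u - p) = k := by rw [map_sub, ← hpk, add_sub_cancel_left]
  have hup : ‖u - p‖ < R := by
    calc ‖u - p‖ ≤ ‖u‖ + ‖p‖ := norm_sub_le u p
      _ < r + (R - r) := add_lt_add hu (hp.trans_le (min_le_right _ _))
      _ = R := add_sub_cancel r R
  refine mem_biUnion (x := u - p) ⟨hsub ⟨u - p, mem_ball_zero_iff.2 hup, rfl⟩, hk_eq ▸ hk⟩ ?_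
  rw [mem_ball, dist_eq_norm, sub_sub_cancel]
  exact hp.trans_le (min_le_left _ _)

theorem relativelyDense_range_prodMk_coe_completion (ι : L →+ G) {r : ℝ}
    (hbdd : TotallyBounded (ball (0 : L) r)) (hdense : RelativelyDense (ι '' ball 0 (r / 2))) :
    RelativelyDense (range fun t : L => (ι t, (t : Completion L))) := by
  obtain ⟨K, hK, hKeq⟩ := hdense
  set B : Set (Completion L) := closure ((↑) '' ball (0 : L) r)
  have hB : IsCompact B :=
    (hbdd.image (Completion.uniformContinuous_coe L)).closure.isCompact_of_isClosed
      isClosed_closure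
  have hball : ball (0 : Completion L) r ⊆ B := by
    refine (Completion.denseRange_coe.open_subset_closure_inter isOpen_ball).trans
      (closure_mono ?_)
    rintro _ ⟨hx, t, rfl⟩
    exact ⟨t, by simpa using hx, rfl⟩
  have hr : 0 < r := by
    obtain ⟨_, ⟨p, hp, rfl⟩, -⟩ := mem_add.1 (hKeq ▸ mem_univ (0 : G))
    linarith [norm_nonneg p, mem_ball_zero_iff.1 hp]
  refine ⟨K ×ˢ B, hK.prod hB, eq_univ_of_forall fun ⟨g, h⟩ => ?_⟩
  obtain ⟨s, hs⟩ := Completion.denseRange_coe.exists_dist_lt h (half_pos hr)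
  obtain ⟨_, ⟨p, hp, rfl⟩, k, hk, hpk⟩ := mem_add.1 (hKeq ▸ mem_univ (g - ι s))
  rw [mem_ball_zero_iff] at hp
  have hclose : h - ((s + p : L) : Completion L) ∈ B := by
    refine hball (mem_ball_zero_iff.2 ?_)
    rw [Completion.coe_add, ← sub_sub]
    calc ‖h - s - p‖ ≤ ‖h - s‖ + ‖(p : Completion L)‖ := norm_sub_le _ _
      _ < r / 2 + r / 2 := by rw [← dist_eq_norm, Completion.norm_coe]; exact add_lt_add hs hp
      _ = r := add_halves r
  refine mem_add.2 ⟨_, ⟨s + p, rfl⟩, (k, _), ⟨hk, hclose⟩, ?_⟩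
  ext
  · simp only [Prod.fst_add, map_add]
    rw [add_assoc, hpk, add_sub_cancel]
  · exact add_sub_cancel _ h

end SeminormedGroup

theorem exists_isCompact_range_prodMk_coe_completion_add_eq_univ {G : Type*}
    [AddCommGroup G] [TopologicalSpace G] {η : G → ℂ} (hclosed : IsClosed {z : G | η z ≠ 0})
    (hdiscrete : IsDiscrete {z : G | η z ≠ 0})
    (hdense : ∀ ε : ℝ, 0 < ε → RelativelyDense (almostPeriods η ε)) {L : AddSubgroup G}
    (hΔL : {z : G | η z ≠ 0} ⊆ L) [PseudoMetricSpace L]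
    (hdist : ∀ s t : L, dist s t = acRho η s t) :
    ∃ C : Set (G × Completion L), IsCompact C ∧
      range (fun t : L => ((t : G), (t : Completion L))) + C = univ := by
  -- `ofAddDist` keeps the given metric, so `Completion L` below is the completion of the statement
  let : Norm L := ⟨dist 0⟩
  let : SeminormedAddCommGroup L := SeminormedAddCommGroup.ofAddDist (fun _ => rfl)
    fun x y z => by rw [hdist, hdist]; push_cast; rw [acRho_add_left]
  have hnorm (u : L) : ‖u‖ = acRho η u 0 := by rw [← dist_zero_right, hdist]; rfl
  have hsub : L.subtype '' ball 0 1 ⊆ {z : G | η z ≠ 0} := by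
    rintro _ ⟨u, hu, rfl⟩
    exact apply_ne_zero_of_acRho_lt_one (by rwa [mem_ball_zero_iff, hnorm] at hu)
  have hdense_ball (ε : ℝ) (hε : 0 < ε) : RelativelyDense (L.subtype '' ball 0 ε) := by
    refine (hdense _ (lt_min hε one_pos)).mono fun t ht => ?_
    have ht' : acRho η t 0 < min ε 1 := ht
    refine ⟨⟨t, hΔL (apply_ne_zero_of_acRho_lt_one ?_)⟩, ?_, rfl⟩
    · exact ht'.trans_le (min_le_right _ _)
    · rw [mem_ball_zero_iff, hnorm]; exact ht'.trans_le (min_le_left _ _)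
  exact relativelyDense_range_prodMk_coe_completion L.subtype
    (totallyBounded_ball_of_relativelyDense L.subtype_injective hclosed hdiscrete
      one_half_lt_one hsub hdense_ball) (hdense_ball _ (by norm_num))

theorem diagonal_embedding_relatively_dense_general {G : Type*} [AddCommGroup G] [TopologicalSpace G]
    (η : G → ℂ)
    (hclosed : IsClosed {z : G | η z ≠ 0}) (hdiscrete : DiscreteTopology {z : G | η z ≠ 0})
    (hdense : ∀ ε : ℝ, 0 < ε → RelativelyDense (almostPeriods η ε))
    [PseudoMetricSpace ↥(AddSubgroup.closure {z : G | η z ≠ 0})]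
    (hdist : ∀ s t : ↥(AddSubgroup.closure {z : G | η z ≠ 0}),
      dist s t = acRho η (s : G) (t : G)) :
    ∃ C : Set (G × UniformSpace.Completion ↥(AddSubgroup.closure {z : G | η z ≠ 0})),
      IsCompact C ∧
      {p : G × UniformSpace.Completion ↥(AddSubgroup.closure {z : G | η z ≠ 0}) |
          ∃ t : ↥(AddSubgroup.closure {z : G | η z ≠ 0}),
            p = ((t : G), (t : UniformSpace.Completion ↥(AddSubgroup.closure {z : G | η z ≠ 0})))}
        + C = Set.univ := by
  obtain ⟨C, hC, hCeq⟩ := exists_isCompact_range_prodMk_coe_completion_add_eq_univ hclosed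
    (isDiscrete_iff_discreteTopology.2 hdiscrete) hdense AddSubgroup.subset_closure hdist
  exact ⟨C, hC, Eq.trans (congrArg (· + C) (Set.ext fun _ => exists_congr fun _ => eq_comm)) hCeq⟩

/-- In the completion setup, the diagonal embedding `L̃ = {(t, φ(t)) : t ∈ L}` is relatively
dense in `G × H`: there is a compact `C` with `L̃ + C = G × H`. -/
theorem diagonal_embedding_relatively_dense {G : Type*} [AddCommGroup G] [TopologicalSpace G]
    [IsTopologicalAddGroup G] [LocallyCompactSpace G] [T2Space G] [SigmaCompactSpace G]
    (η : G → ℂ) (hpd : IsPositiveDefiniteFn η) (hη0 : 0 < (η 0).re)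
    (hclosed : IsClosed {z : G | η z ≠ 0}) (hdiscrete : DiscreteTopology {z : G | η z ≠ 0})
    (hdense : ∀ ε : ℝ, 0 < ε → RelativelyDense (almostPeriods η ε))
    [PseudoMetricSpace ↥(AddSubgroup.closure {z : G | η z ≠ 0})]
    (hdist : ∀ s t : ↥(AddSubgroup.closure {z : G | η z ≠ 0}),
      dist s t = acRho η (s : G) (t : G)) :
    ∃ C : Set (G × UniformSpace.Completion ↥(AddSubgroup.closure {z : G | η z ≠ 0})),
      IsCompact C ∧
      {p : G × UniformSpace.Completion ↥(AddSubgroup.closure {z : G | η z ≠ 0}) |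
          ∃ t : ↥(AddSubgroup.closure {z : G | η z ≠ 0}),
            p = ((t : G), (t : UniformSpace.Completion ↥(AddSubgroup.closure {z : G | η z ≠ 0})))}
        + C = Set.univ :=
  diagonal_embedding_relatively_dense_general η hclosed hdiscrete hdense hdist
end

section
/- In the completion setup, the quotient topological group 𝕋 := (G × H) / L̃ (the quotient of G × H by the subgroup L̃ = {(t, φ(t)) : t ∈ L}, with the quotient topology) is compact. -/
open scoped Pointwise

/-!
Write `Δ` for the support of `η`. Almost periods `P_ε` with `ε ≤ 1` lie in `Δ ⊆ L`. If `l ∈ L`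
has `ρ(l, 0) ≤ r < 1` and `l = p + k` with `p ∈ P_δ` and `k` in the compact set `K_δ`, then
`k = l - p ∈ L` has `ρ(k, 0) < 1`, so `k` lies in the finite set `Δ ∩ K_δ`: closed balls of
radius `< 1` in `L` are totally bounded, and the corresponding balls of the completion `H` are
compact. Given `(g, h) ∈ G × H`, approximate `h` by `l ∈ L` and write `g - l = p + k` with
`p ∈ P_{1/4}`; translating by `t = l + p ∈ L` moves `(g, h)` into the compact set
`K_{1/4} × closedBall 0 (1/2)`, which therefore maps onto the quotient.
-/

open Metric UniformSpace

theorem QuotientAddGroup.compactSpace_of_forall_exists_sub_mem {X : Type*} [AddCommGroup X]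
    [TopologicalSpace X] (S : AddSubgroup X) {F : Set X} (hF : IsCompact F)
    (h : ∀ x, ∃ s ∈ S, x - s ∈ F) : CompactSpace (X ⧸ S) := by
  refine isCompact_univ_iff.mp ?_
  convert hF.image (QuotientAddGroup.continuous_mk (N := S))
  refine (Set.eq_univ_of_forall fun q => ?_).symm
  obtain ⟨x, rfl⟩ := QuotientAddGroup.mk_surjective q
  obtain ⟨s, hs, hxs⟩ := h x
  exact ⟨x - s, hxs, QuotientAddGroup.eq_iff_sub_mem.2 (by simpa using hs)⟩

namespace UniformSpace.Completion

variable {α : Type*} [PseudoMetricSpace α]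

theorem closedBall_subset_closure_image_closedBall (x : α) {r r' : ℝ} (hr : r < r') :
    closedBall (x : Completion α) r ⊆ closure ((↑) '' closedBall x r') := by
  intro y hy
  refine Metric.mem_closure_iff.2 fun ε hε => ?_
  obtain ⟨l, hl⟩ :=
    Metric.denseRange_iff.1 denseRange_coe y (min ε (r' - r)) (lt_min hε (sub_pos.2 hr))
  refine ⟨l, ⟨l, ?_, rfl⟩, hl.trans_le (min_le_left _ _)⟩
  rw [mem_closedBall, ← Completion.dist_eq]
  linarith [dist_triangle_left (l : Completion α) x y, min_le_right ε (r' - r),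
    mem_closedBall.1 hy]

theorem isCompact_closedBall_of_totallyBounded {x : α} {r r' : ℝ} (hr : r < r')
    (h : TotallyBounded (closedBall x r')) : IsCompact (closedBall (x : Completion α) r) :=
  ((h.image (uniformContinuous_coe α)).closure.subset
    (closedBall_subset_closure_image_closedBall x hr)).isCompact_of_isClosed isClosed_closedBall

theorem dist_sub_zero [AddGroup α] [IsUniformAddGroup α]
    (h : ∀ a b : α, dist (a - b) 0 = dist a b) (x y : Completion α) :
    dist (x - y) 0 = dist x y := by
  refine induction_on₂ x y (isClosed_eq (by fun_prop) (by fun_prop)) fun a b => ?_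
  rw [← coe_sub, ← coe_zero, Completion.dist_eq, Completion.dist_eq, h]

end UniformSpace.Completion

section AlmostPeriods

variable {G : Type*} [AddCommGroup G] {η : G → ℂ}

theorem acRho_sub_zero (s t : G) : acRho η (s - t) 0 = acRho η s t := by
  simp [acRho]

theorem almostPeriods_subset_of_le_one {ε : ℝ} (hε : ε ≤ 1) :
    almostPeriods η ε ⊆ {z | η z ≠ 0} := by
  intro t ht h
  simp only [almostPeriods, acRho, Set.mem_ofPred_eq, sub_zero, h, zero_div, norm_one,
    Real.sqrt_one] at ht
  linarith

variable {L : AddSubgroup G} [PseudoMetricSpace L]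

theorem exists_sub_mem_and_dist_coe_lt (hΔL : {z : G | η z ≠ 0} ⊆ L)
    (hdist : ∀ s t : L, dist s t = acRho η s t) {ε : ℝ} (hε : 0 < ε) (hε1 : ε ≤ 1)
    {K : Set G} (hPK : almostPeriods η ε + K = Set.univ) (g : G) (h : Completion L) :
    ∃ t : L, g - t ∈ K ∧ dist h t < 2 * ε := by
  obtain ⟨l, hl⟩ := Metric.denseRange_iff.1 Completion.denseRange_coe h ε hε
  obtain ⟨p, hp, k, hk, hpk⟩ : g - l ∈ almostPeriods η ε + K := hPK ▸ Set.mem_univ _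
  have hpL : p ∈ L := hΔL (almostPeriods_subset_of_le_one hε1 hp)
  refine ⟨l + ⟨p, hpL⟩, ?_, ?_⟩
  · convert hk using 1
    simp only at hpk
    rw [AddSubgroup.coe_add, ← sub_sub, ← hpk, add_sub_cancel_left]
  · have hlt : dist (l : Completion L) ↑(l + ⟨p, hpL⟩) < ε := by
      rw [Completion.dist_eq, dist_comm, hdist, ← acRho_sub_zero]
      simpa using show acRho η p 0 < ε from hp
    linarith [dist_triangle h l ↑(l + ⟨p, hpL⟩)]

variable [TopologicalSpace G]

theorem totallyBounded_closedBall_zero (hclosed : IsClosed {z : G | η z ≠ 0})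
    (hdiscrete : DiscreteTopology {z : G | η z ≠ 0}) (hΔL : {z : G | η z ≠ 0} ⊆ L)
    (hdense : ∀ ε : ℝ, 0 < ε → RelativelyDense (almostPeriods η ε))
    (hdist : ∀ s t : L, dist s t = acRho η s t) {r : ℝ} (hr : r < 1) :
    TotallyBounded (closedBall (0 : L) r) := by
  refine Metric.totallyBounded_iff.2 fun δ hδ => ?_
  obtain ⟨K, hK, hPK⟩ := hdense (min δ (1 - r)) (lt_min hδ (sub_pos.2 hr))
  have hfin : ({z : G | η z ≠ 0} ∩ K).Finite := (hK.inter_left hclosed).finite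
    (isDiscrete_iff_discreteTopology.2 (hdiscrete.of_subset Set.inter_subset_left))
  refine ⟨(↑) ⁻¹' ({z : G | η z ≠ 0} ∩ K), hfin.preimage Subtype.coe_injective.injOn,
    fun l hl => ?_⟩
  have hl : dist l 0 ≤ r := hl
  obtain ⟨p, hp, k, hk, hpk⟩ : (l : G) ∈ almostPeriods η (min δ (1 - r)) + K :=
    hPK ▸ Set.mem_univ _
  have hp : acRho η p 0 < min δ (1 - r) := hp
  have hpL : p ∈ L := hΔL <| almostPeriods_subset_of_le_one
    ((min_le_right _ _).trans (by linarith [dist_nonneg (x := l) (y := 0)])) hp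
  set k' : L := l - ⟨p, hpL⟩
  have hkk' : (k' : G) = k := by simp [k', ← hpk]
  have hlk' : dist l k' < min δ (1 - r) := by
    rwa [hdist, ← acRho_sub_zero, show (l : G) - k' = p by simp [k']]
  have hk'0 : acRho η k 0 < 1 := by
    have := hdist k' 0
    rw [ZeroMemClass.coe_zero, hkk'] at this
    linarith [dist_triangle_left k' 0 l, min_le_right δ (1 - r)]
  exact Set.mem_iUnion₂.2 ⟨k', ⟨hkk' ▸ almostPeriods_subset_of_le_one le_rfl hk'0, hkk' ▸ hk⟩,
    hlk'.trans_le (min_le_left _ _)⟩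

theorem compactSpace_quotient_prod_completion [IsUniformAddGroup L]
    (hclosed : IsClosed {z : G | η z ≠ 0}) (hdiscrete : DiscreteTopology {z : G | η z ≠ 0})
    (hΔL : {z : G | η z ≠ 0} ⊆ L) (hdense : ∀ ε : ℝ, 0 < ε → RelativelyDense (almostPeriods η ε))
    (hdist : ∀ s t : L, dist s t = acRho η s t) :
    CompactSpace ((G × Completion L) ⧸ (L.subtype.prod Completion.toCompl).range) := by
  obtain ⟨K, hK, hPK⟩ := hdense (1 / 4) (by norm_num)
  have hball : IsCompact (closedBall (0 : Completion L) (1 / 2)) := by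
    rw [← Completion.coe_zero]
    exact Completion.isCompact_closedBall_of_totallyBounded (r' := 3 / 4) (by norm_num)
      (totallyBounded_closedBall_zero hclosed hdiscrete hΔL hdense hdist (by norm_num))
  have hdist_sub : ∀ a b : L, dist (a - b) 0 = dist a b := by
    intro a b
    rw [hdist, hdist, ZeroMemClass.coe_zero, AddSubgroup.coe_sub, acRho_sub_zero]
  refine QuotientAddGroup.compactSpace_of_forall_exists_sub_mem _ (hK.prod hball)
    fun ⟨g, h⟩ => ?_
  obtain ⟨t, hgt, hht⟩ :=
    exists_sub_mem_and_dist_coe_lt hΔL hdist (by norm_num) (by norm_num) hPK g h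
  refine ⟨(t, t), ⟨t, rfl⟩, hgt, ?_⟩
  rw [mem_closedBall, Prod.snd_sub, Completion.dist_sub_zero hdist_sub]
  linarith

end AlmostPeriods

theorem quotient_by_diagonal_embedding_compact_general {G : Type*} [AddCommGroup G] [TopologicalSpace G]
    (η : G → ℂ)
    (hclosed : IsClosed {z : G | η z ≠ 0}) (hdiscrete : DiscreteTopology {z : G | η z ≠ 0})
    (hdense : ∀ ε : ℝ, 0 < ε → RelativelyDense (almostPeriods η ε))
    [PseudoMetricSpace ↥(AddSubgroup.closure {z : G | η z ≠ 0})]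
    [IsUniformAddGroup ↥(AddSubgroup.closure {z : G | η z ≠ 0})]
    (hdist : ∀ s t : ↥(AddSubgroup.closure {z : G | η z ≠ 0}),
      dist s t = acRho η (s : G) (t : G)) :
    CompactSpace
      ((G × UniformSpace.Completion ↥(AddSubgroup.closure {z : G | η z ≠ 0})) ⧸
        ((AddSubgroup.closure {z : G | η z ≠ 0}).subtype.prod
          UniformSpace.Completion.toCompl).range) :=
  compactSpace_quotient_prod_completion hclosed hdiscrete AddSubgroup.subset_closure hdense hdist

/-- In the completion setup, the quotient `𝕋 = (G × H)/L̃` of `G × H` by the diagonal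
embedding `L̃ = {(t, φ(t)) : t ∈ L}` is a compact group. -/
theorem quotient_by_diagonal_embedding_compact {G : Type*} [AddCommGroup G] [TopologicalSpace G]
    [IsTopologicalAddGroup G] [LocallyCompactSpace G] [T2Space G] [SigmaCompactSpace G]
    (η : G → ℂ) (hpd : IsPositiveDefiniteFn η) (hη0 : 0 < (η 0).re)
    (hclosed : IsClosed {z : G | η z ≠ 0}) (hdiscrete : DiscreteTopology {z : G | η z ≠ 0})
    (hdense : ∀ ε : ℝ, 0 < ε → RelativelyDense (almostPeriods η ε))
    [PseudoMetricSpace ↥(AddSubgroup.closure {z : G | η z ≠ 0})]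
    [IsUniformAddGroup ↥(AddSubgroup.closure {z : G | η z ≠ 0})]
    (hdist : ∀ s t : ↥(AddSubgroup.closure {z : G | η z ≠ 0}),
      dist s t = acRho η (s : G) (t : G)) :
    CompactSpace
      ((G × UniformSpace.Completion ↥(AddSubgroup.closure {z : G | η z ≠ 0})) ⧸
        ((AddSubgroup.closure {z : G | η z ≠ 0}).subtype.prod
          UniformSpace.Completion.toCompl).range) :=
  quotient_by_diagonal_embedding_compact_general η hclosed hdiscrete hdense hdist
end
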